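/- arXiv:2211.09125 — 9 statements merged into one kernel-verified Lean document; each statement's English description precedes it below -/
import Mathlib

section
/- Let R be a commutative ring of characteristic p that is differentiably simple (its only ideals stable under all derivations are 0 and R). Then R is a local ring and every element x of its maximal ideal satisfies x^p = 0. -/
/-- An ideal is *differential* if it is stable under every derivation of the ring. -/
def Ideal.IsDifferential {R : Type*} [CommRing R] (I : Ideal R) : Prop :=
  ∀ D : Derivation ℤ R R, ∀ x ∈ I, D x ∈ I

/-- A commutative ring is *differentiably simple* if its only differential ideals
are `⊥` and `⊤`. -/
def IsDifferentiablySimple (R : Type*) [CommRing R] : Prop :=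
  ∀ I : Ideal R, I.IsDifferential → I = ⊥ ∨ I = ⊤

theorem stmt0 (p : ℕ) (hp : p.Prime) (R : Type*) [CommRing R] [CharP R p]
    (hR : IsDifferentiablySimple R) :
    IsLocalRing R ∧ ∀ x : R, ¬ IsUnit x → x ^ p = 0 := by
  haveI : Nontrivial R := CharP.nontrivial_of_char_ne_one (R := R) hp.ne_one
  -- Key: for any maximal ideal m, every x ∈ m satisfies x^p = 0.
  have key : ∀ m : Ideal R, m.IsMaximal → ∀ x ∈ m, x ^ p = 0 := by
    intro m hm x hx
    set J : Ideal R := Ideal.span ((fun y => y ^ p) '' (m : Set R)) with hJ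
    have hDpow : ∀ (D : Derivation ℤ R R) (y : R), D (y ^ p) = 0 := by
      intro D y
      rw [Derivation.leibniz_pow]
      rw [nsmul_eq_mul]
      rw [CharP.cast_eq_zero R p, zero_mul]
    have hdiff : J.IsDifferential := by
      intro D z hz
      induction hz using Submodule.span_induction with
      | mem w hw =>
        obtain ⟨y, _, rfl⟩ := hw
        rw [hDpow]; exact J.zero_mem
      | zero => rw [map_zero]; exact J.zero_mem
      | add a b ha hb iha ihb => rw [map_add]; exact J.add_mem iha ihb
      | smul a b hb ihb =>
        rw [smul_eq_mul, Derivation.leibniz, smul_eq_mul, smul_eq_mul]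
        exact J.add_mem (J.mul_mem_left a ihb) (J.mul_mem_right _ hb)
    have hle : J ≤ m := by
      rw [hJ, Ideal.span_le]
      rintro w ⟨y, hy, rfl⟩
      have : 0 < p := hp.pos
      have hyp : y ^ p = y ^ (p - 1) * y := by
        rw [← pow_succ, Nat.sub_add_cancel hp.one_lt.le]
      show y ^ p ∈ m
      rw [hyp]; exact m.mul_mem_left _ hy
    have hJbot : J = ⊥ := by
      rcases hR J hdiff with h | h
      · exact h
      · exact absurd (h ▸ hle) (fun hh => hm.ne_top (top_le_iff.mp hh))
    have : x ^ p ∈ J := Ideal.subset_span ⟨x, hx, rfl⟩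
    rwa [hJbot, Ideal.mem_bot] at this
  obtain ⟨m, hm⟩ := Ideal.exists_maximal R
  have nonunit_mem : ∀ x : R, ¬ IsUnit x → x ∈ m := by
    intro x hx
    obtain ⟨m', hm', hxm'⟩ := Ideal.exists_le_maximal (Ideal.span {x})
      (Ideal.span_singleton_ne_top hx)
    have hxp : x ^ p = 0 := key m' hm' x (hxm' (Ideal.subset_span rfl))
    have : x ^ p ∈ m := hxp ▸ m.zero_mem
    exact hm.isPrime.mem_of_pow_mem _ this
  constructor
  · apply IsLocalRing.of_nonunits_add
    intro a b ha hb
    intro hab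
    exact hm.ne_top (Ideal.eq_top_of_isUnit_mem m
      (m.add_mem (nonunit_mem a ha) (nonunit_mem b hb)) hab)
  · intro x hx
    exact key m hm x (nonunit_mem x hx)
end

section
/- Let R be a differentiably simple commutative ring of characteristic p. Then the subring R^p = {x^p : x ∈ R} is a field. -/
/-- The subring `R^p` of `p`-th powers of a commutative ring of characteristic `p`,
i.e. the range of the Frobenius endomorphism. -/
def pPowerSubring (R : Type*) [CommRing R] (p : ℕ) [Fact p.Prime] [CharP R p] : Subring R :=
  (frobenius R p).range

theorem stmt1 (p : ℕ) [Fact p.Prime] (R : Type*) [CommRing R] [CharP R p]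
    (hR : IsDifferentiablySimple R) :
    IsField (pPowerSubring R p) := by
  have hp : p.Prime := Fact.out
  haveI : Nontrivial R := CharP.nontrivial_of_char_ne_one hp.ne_one
  refine ⟨⟨0, 1, ?_⟩, mul_comm, ?_⟩
  · intro h
    exact zero_ne_one (congrArg Subtype.val h)
  · rintro ⟨b, hbmem⟩ hb0
    obtain ⟨a, rfl⟩ := hbmem
    set b := frobenius R p a with hb
    have hbR : b ≠ 0 := fun h => hb0 (Subtype.ext h)
    have hDb : ∀ D : Derivation ℤ R R, D b = 0 := by
      intro D
      rw [hb, frobenius_def, Derivation.leibniz_pow]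
      rw [smul_eq_mul, nsmul_eq_mul, CharP.cast_eq_zero R p, zero_mul]
    have hdiff : (Ideal.span {b}).IsDifferential := by
      intro D x hx
      rw [Ideal.mem_span_singleton] at hx ⊢
      obtain ⟨r, rfl⟩ := hx
      refine ⟨D r, ?_⟩
      rw [D.leibniz, hDb, smul_eq_mul, smul_eq_mul, mul_zero, add_zero, mul_comm]
    rcases hR _ hdiff with h | h
    · exact absurd (Ideal.span_eq_bot.mp h b rfl) hbR
    · obtain ⟨c, hc⟩ := Ideal.mem_span_singleton'.mp ((Ideal.eq_top_iff_one _).mp h)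
      refine ⟨⟨b ^ (p - 1) * c ^ p, ⟨a ^ (p - 1) * c, ?_⟩⟩, ?_⟩
      · rw [frobenius_def, mul_pow, hb, frobenius_def, ← pow_mul, ← pow_mul, mul_comm (p-1) p]
      · apply Subtype.ext
        show b * (b ^ (p - 1) * c ^ p) = 1
        rw [← mul_assoc, ← pow_succ', Nat.sub_add_cancel hp.one_le, ← mul_pow,
          mul_comm b c, hc, one_pow]
end

section
/- Let L be a field of characteristic p and n ≥ 0. Then the ring R = L[X_1,…,X_n]/⟨X_1^p,…,X_n^p⟩ is differentiably simple, i.e., the only ideals of R stable under all derivations of R are 0 and R. -/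
/-!
In characteristic `p` every derivation kills `p`-th powers, so `J = ⟨X_i ^ p⟩` is a differential
ideal; every derivation of `K[X]` then descends to `K[X] ⧸ J`, and the preimage in `K[X]` of a
differential ideal of the quotient is differential. A nonzero class is represented by a nonzero
polynomial with all exponents `< p`. A partial derivative that does not vanish on such a
polynomial keeps that property and lowers the total degree; if all partial derivatives vanish,
the polynomial is a constant, since an exponent `0 < e < p` is nonzero in `K`. So the ideal
contains a unit.
-/

open MvPolynomial

section DifferentialIdeal

variable {A : Type*} [CommRing A]

theorem Ideal.isDifferential_span_range_pow (p : ℕ) [CharP A p] {ι : Type*} (x : ι → A) :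
    (Ideal.span (Set.range fun i => x i ^ p)).IsDifferential := by
  intro D y hy
  induction hy using Submodule.span_induction with
  | mem z hz =>
    obtain ⟨i, rfl⟩ := hz
    simp [D.leibniz_pow, nsmul_eq_mul]
  | zero => simp
  | add y z _ _ hy hz => simpa using add_mem hy hz
  | smul a z hz hDz =>
    rw [smul_eq_mul, D.leibniz, smul_eq_mul, smul_eq_mul]
    exact add_mem (Ideal.mul_mem_left _ a hDz) (Ideal.mul_mem_right _ _ hz)

theorem Ideal.IsDifferential.comap_quotientMk {J : Ideal A} (hJ : J.IsDifferential)
    {I : Ideal (A ⧸ J)} (hI : I.IsDifferential) :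
    (I.comap (Ideal.Quotient.mk J)).IsDifferential := by
  intro D x hx
  have hD : ∀ y, Ideal.Quotient.mkₐ ℤ J y = 0 → Ideal.Quotient.mkₐ ℤ J (D y) = 0 := by
    simpa [Ideal.Quotient.eq_zero_iff_mem] using hJ D
  rw [Ideal.mem_comap]
  -- `convert` absorbs a mismatch between the instance paths on `A ⧸ J` of the two sides
  convert hI (Derivation.liftOfSurjective (Ideal.Quotient.mkₐ_surjective ℤ J) hD) _ hx using 1
  exact (Derivation.liftOfSurjective_apply _ hD x).symm

end DifferentialIdeal

namespace MvPolynomial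

variable {σ R : Type*} [CommSemiring R]

theorem mem_span_range_X_pow_iff {p : ℕ} {f : MvPolynomial σ R} :
    f ∈ Ideal.span (Set.range fun i => (X i : MvPolynomial σ R) ^ p) ↔
      f ∈ restrictSupport R {m | ∃ i, p ≤ m i} := by
  have hrange : (Set.range fun i => (X i : MvPolynomial σ R) ^ p) =
      (fun m => monomial m (1 : R)) '' Set.range fun i => Finsupp.single i p := by
    rw [← Set.range_comp]
    simp only [Function.comp_def, X_pow_eq_monomial]
  simp only [hrange, mem_ideal_span_monomial_image, Set.exists_range_iff, Finsupp.single_le_iff,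
    mem_restrictSupport_iff, Set.subset_def, Finset.mem_coe, Set.mem_ofPred_eq]

theorem restrictSupport_sup_restrictSupport_compl (s : Set (σ →₀ ℕ)) :
    restrictSupport R s ⊔ restrictSupport R sᶜ = ⊤ := by
  classical
  rw [eq_top_iff]
  rintro f -
  induction f using MvPolynomial.induction_on' with
  | monomial m a =>
    by_cases hm : m ∈ s
    · exact Submodule.mem_sup_left (by simp [hm])
    · exact Submodule.mem_sup_right (by simp [hm])
  | add f g hf hg => exact add_mem hf hg

theorem totalDegree_pderiv_lt {i : σ} {f : MvPolynomial σ R} (h : pderiv i f ≠ 0) :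
    (pderiv i f).totalDegree < f.totalDegree := by
  obtain ⟨m, hm, hdeg⟩ := Finset.exists_mem_eq_sup _ (support_nonempty.mpr h)
    fun m : σ →₀ ℕ => m.sum fun _ e => e
  have hm' : m + Finsupp.single i 1 ∈ f.support := by
    rw [mem_support_iff, coeff_pderiv] at hm
    exact mem_support_iff.mpr (left_ne_zero_of_mul hm)
  calc (pderiv i f).totalDegree = m.sum fun _ e => e := hdeg
    _ < (m + Finsupp.single i 1).sum fun _ e => e := by
      rw [Finsupp.sum_add_index' (fun _ => rfl) (fun _ _ _ => rfl), Finsupp.sum_single_index rfl]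
      exact Nat.lt_succ_self _
    _ ≤ f.totalDegree := le_totalDegree hm'

theorem pderiv_mem_restrictSupport {s : Set (σ →₀ ℕ)} (hs : IsLowerSet s) (i : σ)
    {f : MvPolynomial σ R} (hf : f ∈ restrictSupport R s) : pderiv i f ∈ restrictSupport R s := by
  rw [mem_restrictSupport_iff] at hf ⊢
  intro m hm
  rw [Finset.mem_coe, mem_support_iff, coeff_pderiv] at hm
  exact hs le_self_add (hf (mem_support_iff.mpr (left_ne_zero_of_mul hm)))

theorem eq_C_coeff_zero_of_pderiv_eq_zero {p : ℕ} [CharP R p] [NoZeroDivisors R]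
    {f : MvPolynomial σ R} (hf : f ∈ restrictSupport R {m | ∀ i, m i < p})
    (h : ∀ i, pderiv i f = 0) : f = C (coeff 0 f) := by
  classical
  ext m
  rw [coeff_C]
  split_ifs with hm
  · rw [hm]
  obtain ⟨i, hi⟩ : ∃ i, m i ≠ 0 := by
    by_contra! h0
    exact hm (Finsupp.ext h0).symm
  obtain ⟨m, rfl⟩ : ∃ m', m = m' + Finsupp.single i 1 :=
    ⟨m - Finsupp.single i 1, (tsub_add_cancel_of_le (Finsupp.single_le_iff.mpr
      (Nat.one_le_iff_ne_zero.mpr hi))).symm⟩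
  by_contra hcoeff
  have hlt : m i + 1 < p := by simpa using hf (mem_support_iff.mpr hcoeff) i
  have hzero := coeff_pderiv (i := i) f m
  rw [h i, coeff_zero, eq_comm, mul_eq_zero] at hzero
  refine hzero.elim hcoeff fun hcast => ?_
  rw [← Nat.cast_succ, CharP.cast_eq_zero_iff R p] at hcast
  exact hlt.not_ge (Nat.le_of_dvd (m i).succ_pos hcast)

end MvPolynomial

theorem Ideal.IsDifferential.eq_top_of_mem_restrictSupport {σ K : Type*} [Field K] {p : ℕ}
    [CharP K p] {I : Ideal (MvPolynomial σ K)} (hI : I.IsDifferential) {f : MvPolynomial σ K}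
    (hf : f ∈ restrictSupport K {m | ∀ i, m i < p}) (hf0 : f ≠ 0) (hfI : f ∈ I) : I = ⊤ := by
  induction hd : f.totalDegree using Nat.strong_induction_on generalizing f with
  | _ d ih =>
    by_cases hconst : ∀ i, pderiv i f = 0
    · have hC := eq_C_coeff_zero_of_pderiv_eq_zero hf hconst
      have hc : coeff 0 f ≠ 0 := by rwa [hC, Ne, C_eq_zero] at hf0
      exact Ideal.eq_top_of_isUnit_mem _ hfI (hC ▸ hc.isUnit.map C)
    · obtain ⟨i, hi⟩ := not_forall.mp hconst
      have hlower : IsLowerSet {m : σ →₀ ℕ | ∀ i, m i < p} :=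
        fun _ _ hle hm j => (hle j).trans_lt (hm j)
      exact ih _ (hd ▸ totalDegree_pderiv_lt hi) (pderiv_mem_restrictSupport hlower i hf) hi
        (hI ((pderiv i).restrictScalars ℤ) f hfI) rfl

theorem isDifferentiablySimple_quotient_span_range_X_pow {σ K : Type*} [Field K] (p : ℕ)
    [CharP K p] : IsDifferentiablySimple
      (MvPolynomial σ K ⧸ Ideal.span (Set.range fun i => (X i : MvPolynomial σ K) ^ p)) := by
  intro I hI
  refine or_iff_not_imp_left.mpr fun hI0 => ?_
  obtain ⟨x, hxI, hx0⟩ := Submodule.exists_mem_ne_zero_of_ne_bot hI0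
  obtain ⟨f, rfl⟩ := Ideal.Quotient.mk_surjective x
  obtain ⟨g, hg, h, hh, rfl⟩ := Submodule.mem_sup.mp
    ((restrictSupport_sup_restrictSupport_compl (R := K) {m : σ →₀ ℕ | ∀ i, m i < p}).ge
      (Submodule.mem_top (x := f)))
  have hhJ : h ∈ Ideal.span (Set.range fun i => (X i : MvPolynomial σ K) ^ p) :=
    mem_span_range_X_pow_iff.mpr (by simpa [Set.compl_ofPred] using hh)
  rw [map_add, Ideal.Quotient.eq_zero_iff_mem.mpr hhJ, add_zero] at hxI hx0
  have hg0 : g ≠ 0 := by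
    rintro rfl
    exact hx0 (map_zero _)
  rw [← Ideal.comap_eq_top_iff (f := Ideal.Quotient.mk _)]
  have hcomap := (Ideal.isDifferential_span_range_pow p X).comap_quotientMk hI
  exact hcomap.eq_top_of_mem_restrictSupport hg hg0 hxI

theorem stmt2_general (p : ℕ) (L : Type*) [Field L] [CharP L p] (n : ℕ) :
    IsDifferentiablySimple
      (MvPolynomial (Fin n) L ⧸
        Ideal.span (Set.range fun i : Fin n => (MvPolynomial.X i : MvPolynomial (Fin n) L) ^ p)) :=
  isDifferentiablySimple_quotient_span_range_X_pow p

theorem stmt2 (p : ℕ) (hp : p.Prime) (L : Type*) [Field L] [CharP L p] (n : ℕ) :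
    IsDifferentiablySimple
      (MvPolynomial (Fin n) L ⧸
        Ideal.span (Set.range fun i : Fin n => (MvPolynomial.X i : MvPolynomial (Fin n) L) ^ p)) :=
  stmt2_general p L n
end

section
/- Let S be a commutative ring whose module of Kähler differentials Ω_S (over ℤ) is projective, let I be an ideal of S, and let π : S → S/I be the quotient map. Then for every derivation δ of S/I there exists a derivation D of S such that π ∘ D = δ ∘ π. -/
theorem stmt3 (S : Type*) [CommRing S]
    (hproj : Module.Projective S (Ω[S⁄ℤ]))
    (I : Ideal S) (δ : Derivation ℤ (S ⧸ I) (S ⧸ I)) :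
    ∃ D : Derivation ℤ S S, ∀ s : S,
      Ideal.Quotient.mk I (D s) = δ (Ideal.Quotient.mk I s) := by
  let δ' : Derivation ℤ S (S ⧸ I) := δ.compAlgebraMap S
  let f : Ω[S⁄ℤ] →ₗ[S] (S ⧸ I) := δ'.liftKaehlerDifferential
  obtain ⟨g, hg⟩ := Module.projective_lifting_property (Algebra.linearMap S (S ⧸ I)) f
    Ideal.Quotient.mk_surjective
  refine ⟨LinearMap.compDer g (KaehlerDifferential.D ℤ S), fun s => ?_⟩
  have h1 : Ideal.Quotient.mk I (g ((KaehlerDifferential.D ℤ S) s))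
      = (Algebra.linearMap S (S ⧸ I)) (g ((KaehlerDifferential.D ℤ S) s)) := rfl
  have h2 := LinearMap.congr_fun hg ((KaehlerDifferential.D ℤ S) s)
  simp only [LinearMap.comp_apply] at h2
  have h3 : f ((KaehlerDifferential.D ℤ S) s) = δ' s :=
    Derivation.liftKaehlerDifferential_comp_D δ' s
  simp [LinearMap.compDer, h1, h2, h3, δ']
end

section
/- Let R = L[X_1,…,X_n]/⟨X_1^p,…,X_n^p⟩ over a field L of characteristic p, with maximal ideal m, and let f ∈ m \ m². Then the annihilator of f in R equals the principal ideal f^{p-1}R. -/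
open MvPolynomial

private lemma mem_span_Xpow_iff {n p : ℕ} {L : Type*} [Field L] (G : MvPolynomial (Fin n) L) :
    G ∈ Ideal.span (Set.range fun i : Fin n => (X i : MvPolynomial (Fin n) L) ^ p) ↔
      ∀ d ∈ G.support, ∃ j, p ≤ d j := by
  have h : (Set.range fun i : Fin n => (X i : MvPolynomial (Fin n) L) ^ p)
      = (fun s => monomial s (1 : L)) '' (Set.range fun j : Fin n => Finsupp.single j p) := by
    rw [← Set.range_comp]
    simp [Function.comp_def, X_pow_eq_monomial]
  rw [h, mem_ideal_span_monomial_image]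
  simp [Finsupp.single_le_iff]

private lemma mem_span_X_iff {n : ℕ} {L : Type*} [Field L] (G : MvPolynomial (Fin n) L) :
    G ∈ Ideal.span (Set.range (X : Fin n → MvPolynomial (Fin n) L)) ↔
      ∀ d ∈ G.support, ∃ j, d j ≠ 0 := by
  rw [← Set.image_univ, mem_ideal_span_X_image]
  simp

private lemma mem_of_support {n : ℕ} {L : Type*} [Field L]
    (K : Ideal (MvPolynomial (Fin n) L)) (G : MvPolynomial (Fin n) L)
    (h : ∀ d ∈ G.support, (monomial d (coeff d G) : MvPolynomial (Fin n) L) ∈ K) : G ∈ K := by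
  rw [← support_sum_monomial_coeff G]; exact Ideal.sum_mem _ h

private lemma monomial_mem_of_le {n : ℕ} {L : Type*} [Field L]
    {K : Ideal (MvPolynomial (Fin n) L)} {e d : Fin n →₀ ℕ} (c : L)
    (hle : e ≤ d) (h : (monomial e 1 : MvPolynomial (Fin n) L) ∈ K) :
    (monomial d c : MvPolynomial (Fin n) L) ∈ K := by
  have hd : (monomial d c : MvPolynomial (Fin n) L) = monomial (d - e) c * monomial e 1 := by
    rw [monomial_mul, mul_one, tsub_add_cancel_of_le hle]
  rw [hd]; exact Ideal.mul_mem_left _ _ h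

theorem stmt5 (p : ℕ) (hp : p.Prime) (L : Type*) [Field L] [CharP L p] (n : ℕ)
    (R : Type*) [CommRing R]
    (π : MvPolynomial (Fin n) L →+* R)
    (hπ : Function.Surjective π)
    (hker : RingHom.ker π =
      Ideal.span (Set.range fun i : Fin n =>
        (MvPolynomial.X i : MvPolynomial (Fin n) L) ^ p))
    (m : Ideal R)
    (hm : m = Ideal.span (Set.range fun i : Fin n => π (MvPolynomial.X i)))
    (f : R) (hf : f ∈ m) (hf2 : f ∉ m ^ 2) :
    ∀ r : R, r * f = 0 ↔ r ∈ Ideal.span {f ^ (p - 1)} := by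
  classical
  haveI := Fact.mk hp
  have hp1 : p - 1 + 1 = p := Nat.succ_pred_eq_of_pos hp.pos
  set Jid : Ideal (MvPolynomial (Fin n) L) :=
    Ideal.span (Set.range (X : Fin n → MvPolynomial (Fin n) L)) with hJid
  have hmJ : m = Ideal.map π Jid := by
    rw [hm, hJid, Ideal.map_span, ← Set.range_comp]; rfl
  have hm2 : m ^ 2 = Ideal.map π (Jid ^ 2) := by rw [Ideal.map_pow, hmJ]
  have hXp0 : ∀ j : Fin n, π (X j) ^ p = 0 := by
    intro j
    rw [← map_pow]
    exact RingHom.mem_ker.mp (hker ▸ Ideal.subset_span ⟨j, rfl⟩)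
  -- p-th powers of elements of Jid lie in ker π
  have hJp : ∀ F ∈ Jid, F ^ p ∈ RingHom.ker π := by
    intro F hF
    rw [hker]
    refine Submodule.span_induction ?_ ?_ ?_ ?_ hF
    · rintro _ ⟨j, rfl⟩; exact Ideal.subset_span ⟨j, rfl⟩
    · rw [zero_pow hp.ne_zero]; exact Ideal.zero_mem _
    · intro x y hx hy hx' hy'
      rw [add_pow_char]
      exact Ideal.add_mem _ hx' hy'
    · intro a x hx hx'
      rw [smul_eq_mul, mul_pow]
      exact Ideal.mul_mem_left _ _ hx'
  obtain ⟨F, hFJ, hFf⟩ := Ideal.mem_map_iff_of_surjective π hπ |>.mp (hmJ ▸ hf)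
  have hfp : f ^ p = 0 := by
    rw [← hFf, ← map_pow]; exact RingHom.mem_ker.mp (hJp F hFJ)
  have hbw : ∀ r : R, r ∈ Ideal.span {f ^ (p - 1)} → r * f = 0 := by
    intro r hr
    obtain ⟨t, ht⟩ := Ideal.mem_span_singleton'.mp hr
    rw [← ht, mul_assoc, ← pow_succ, hp1, hfp, mul_zero]
  -- linear part of F
  set c : Fin n → L := fun j => coeff (Finsupp.single j 1) F with hc
  set F₂ : MvPolynomial (Fin n) L :=
    F - ∑ j, monomial (Finsupp.single j 1) (c j) with hF₂
  have hcoeffF0 : coeff 0 F = 0 := by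
    by_contra h
    obtain ⟨j, hj⟩ := (mem_span_X_iff F).mp hFJ 0 (mem_support_iff.mpr h)
    simp at hj
  have hXmon : ∀ (j : Fin n), (X j : MvPolynomial (Fin n) L)
      = monomial (Finsupp.single j 1) 1 := by
    intro j; rw [← X_pow_eq_monomial, pow_one]
  have hF₂J2 : F₂ ∈ Jid ^ 2 := by
    apply mem_of_support
    intro d hd
    have hcd : coeff d F₂ ≠ 0 := mem_support_iff.mp hd
    have hcsum : ∀ d' : Fin n →₀ ℕ,
        coeff d' (∑ j, monomial (Finsupp.single j 1) (c j))
          = ∑ j, if Finsupp.single j 1 = d' then c j else 0 := by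
      intro d'
      rw [MvPolynomial.coeff_sum]
      exact Finset.sum_congr rfl fun j _ => coeff_monomial _ _ _
    have hd0 : d ≠ 0 := by
      intro h
      apply hcd
      rw [hF₂, coeff_sub, h, hcoeffF0, hcsum]
      rw [Finset.sum_eq_zero, sub_zero]
      intro j _
      rw [if_neg (by simp)]
    have hsing : ∀ j : Fin n, d ≠ Finsupp.single j 1 := by
      intro j h
      apply hcd
      rw [hF₂, coeff_sub, hcsum, h]
      rw [Finset.sum_eq_single j]
      · simp [hc]
      · intro k _ hk
        rw [if_neg]
        intro hkj
        exact hk ((Finsupp.single_left_inj one_ne_zero).mp hkj)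
      · simp
    -- find a pair
    obtain ⟨j, hj⟩ : ∃ j, d j ≠ 0 := by
      by_contra h
      push_neg at h
      exact hd0 (Finsupp.ext fun a => h a)
    have hpair : ∃ j k : Fin n,
        Finsupp.single j 1 + Finsupp.single k 1 ≤ d := by
      rcases Nat.lt_or_ge (d j) 2 with h2 | h2
      · have hdj : d j = 1 := by omega
        obtain ⟨k, hkj, hk⟩ : ∃ k, k ≠ j ∧ d k ≠ 0 := by
          by_contra h
          push_neg at h
          apply hsing j
          ext a
          by_cases ha : a = j
          · subst ha; simp [hdj]
          · simp [h a ha, Finsupp.single_apply, Ne.symm ha]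
        refine ⟨j, k, fun l => ?_⟩
        simp only [Finsupp.add_apply, Finsupp.single_apply]
        by_cases hlj : j = l
        · subst hlj
          rw [if_pos rfl, if_neg hkj]
          omega
        · rw [if_neg hlj]
          by_cases hlk : k = l
          · subst hlk
            rw [if_pos rfl]
            omega
          · rw [if_neg hlk]; omega
      · refine ⟨j, j, fun l => ?_⟩
        simp only [Finsupp.add_apply, Finsupp.single_apply]
        by_cases hlj : j = l
        · subst hlj; simp; omega
        · rw [if_neg hlj]; omega
    obtain ⟨j, k, hle⟩ := hpair
    refine monomial_mem_of_le _ hle ?_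
    have : (monomial (Finsupp.single j 1 + Finsupp.single k 1) 1
        : MvPolynomial (Fin n) L) = X j * X k := by
      rw [hXmon j, hXmon k, monomial_mul, mul_one]
    rw [this, pow_two]
    exact Ideal.mul_mem_mul (Ideal.subset_span ⟨j, rfl⟩) (Ideal.subset_span ⟨k, rfl⟩)
  -- a nonzero linear coefficient
  obtain ⟨i, hci⟩ : ∃ i, c i ≠ 0 := by
    by_contra h
    push_neg at h
    have hF2F : F₂ = F := by
      rw [hF₂]
      rw [Finset.sum_eq_zero, sub_zero]
      intro j _
      rw [h j, monomial_zero]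
    apply hf2
    rw [hm2, ← hFf]
    exact Ideal.mem_map_of_mem π (hF2F ▸ hF₂J2)
  -- the substitution endomorphism
  set g : Fin n → MvPolynomial (Fin n) L := fun j => if j = i then F else X j with hg
  set ψ : MvPolynomial (Fin n) L →+* R := π.comp (bind₁ g).toRingHom with hψ
  have hψa : ∀ a, ψ a = π (bind₁ g a) := fun a => rfl
  have hψker : RingHom.ker π ≤ RingHom.ker ψ := by
    rw [hker, Ideal.span_le]
    rintro _ ⟨j, rfl⟩
    rw [SetLike.mem_coe, RingHom.mem_ker, hψa, map_pow, bind₁_X_right]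
    by_cases hj : j = i
    · subst hj
      rw [hg]
      simp only [if_pos rfl]
      exact RingHom.mem_ker.mp (hJp F hFJ)
    · rw [hg]
      simp only [if_neg hj]
      rw [map_pow]
      exact hXp0 j
  obtain ⟨ρ, hρ⟩ := hπ.hasRightInverse
  set σ : R →+* R := π.liftOfRightInverse ρ hρ ⟨ψ, hψker⟩ with hσdef
  have hσπ : ∀ a, σ (π a) = π (bind₁ g a) :=
    fun a => π.liftOfRightInverse_comp_apply ρ hρ ⟨ψ, hψker⟩ a
  have hσxi : σ (π (X i)) = f := by
    rw [hσπ, bind₁_X_right, hg]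
    simp only [if_pos rfl]
    exact hFf
  have hσxj : ∀ j, j ≠ i → σ (π (X j)) = π (X j) := by
    intro j hj
    rw [hσπ, bind₁_X_right, hg]
    simp only [if_neg hj]
  have hσC : ∀ l : L, σ (π (C l)) = π (C l) := by
    intro l; rw [hσπ, bind₁_C_right]
  -- the range of σ
  set S : Subring R := σ.range with hS
  have hfS : f ∈ S := ⟨π (X i), hσxi⟩
  have hxjS : ∀ j, j ≠ i → π (X j) ∈ S := fun j hj => ⟨π (X j), hσxj j hj⟩
  have hCS : ∀ l : L, π (C l) ∈ S := fun l => ⟨π (C l), hσC l⟩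
  -- nilpotency of m
  obtain ⟨N, hN⟩ : ∃ N, m ^ N = ⊥ := by
    have hfg : m.FG := by
      rw [hm]
      exact Submodule.fg_span (Set.finite_range _)
    have hle : m ≤ Ideal.radical ⊥ := by
      rw [hm, Ideal.span_le]
      rintro _ ⟨j, rfl⟩
      exact ⟨p, by rw [hXp0 j]; exact Ideal.zero_mem _⟩
    obtain ⟨N, hN⟩ := Ideal.exists_pow_le_of_le_radical_of_fg hle hfg
    exact ⟨N, le_bot_iff.mp hN⟩
  have hxm : ∀ j : Fin n, π (X j) ∈ m := by
    intro j; rw [hm]; exact Ideal.subset_span ⟨j, rfl⟩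
  have hπF₂ : π F₂ ∈ m ^ 2 := by rw [hm2]; exact Ideal.mem_map_of_mem π hF₂J2
  have hmonCX : ∀ j : Fin n, (monomial (Finsupp.single j 1) (c j) : MvPolynomial (Fin n) L)
      = C (c j) * X j := by
    intro j; rw [hXmon, C_mul_monomial, mul_one]
  have hfdec : f = π F₂ + ∑ j, π (C (c j)) * π (X j) := by
    rw [← hFf]
    conv_lhs => rw [show F = F₂ + ∑ j, monomial (Finsupp.single j 1) (c j) by
      rw [hF₂]; ring]
    rw [map_add, map_sum]
    congr 1
    refine Finset.sum_congr rfl fun j _ => ?_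
    rw [hmonCX j, map_mul]
  -- each generator is congruent mod m^2 to an element of S ∩ m
  have hgeni : ∃ s, s ∈ S ∧ s ∈ m ∧ π (X i) - s ∈ m ^ 2 := by
    · set a := c i with ha
      set s : R := π (C a⁻¹) * f - ∑ k ∈ Finset.univ.erase i, π (C (a⁻¹ * c k)) * π (X k)
        with hs
      have hkey : s = π (X i) + π (C a⁻¹) * π F₂ := by
        rw [hs, hfdec, mul_add, Finset.mul_sum]
        have h1 : ∀ k : Fin n, π (C a⁻¹) * (π (C (c k)) * π (X k))
            = π (C (a⁻¹ * c k)) * π (X k) := by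
          intro k
          rw [← mul_assoc, ← map_mul, ← C_mul]
        simp only [h1]
        rw [← Finset.add_sum_erase _ _ (Finset.mem_univ i)]
        have h2 : π (C (a⁻¹ * c i)) = 1 := by
          rw [inv_mul_cancel₀ hci, C_1, map_one]
        rw [h2, one_mul]
        ring
      have hdiff : π (X i) - s ∈ m ^ 2 := by
        rw [hkey]
        have : π (X i) - (π (X i) + π (C a⁻¹) * π F₂) = -(π (C a⁻¹) * π F₂) := by ring
        rw [this]
        exact neg_mem (Ideal.mul_mem_left _ _ hπF₂)
      refine ⟨s, ?_, ?_, hdiff⟩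
      · rw [hs]
        refine sub_mem (mul_mem (hCS _) hfS) (Subring.sum_mem _ fun k hk => ?_)
        exact mul_mem (hCS _) (hxjS k (Finset.ne_of_mem_erase hk))
      · have : s = π (X i) - (π (X i) - s) := by ring
        rw [this]
        exact sub_mem (hxm i) (Ideal.pow_le_self two_ne_zero hdiff)
  have hgen : ∀ j : Fin n, ∃ s, s ∈ S ∧ s ∈ m ∧ π (X j) - s ∈ m ^ 2 := by
    intro j
    by_cases hj : j = i
    · rw [hj]; exact hgeni
    · exact ⟨π (X j), hxjS j hj, hxm j, by simp⟩
  -- every element of m is congruent mod m^2 to an element of S ∩ m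
  have hZ1 : ∀ z ∈ m, ∃ s, s ∈ S ∧ s ∈ m ∧ z - s ∈ m ^ 2 := by
    intro z hz
    rw [hm] at hz
    refine Submodule.span_induction ?_ ?_ ?_ ?_ hz
    · rintro _ ⟨j, rfl⟩; exact hgen j
    · exact ⟨0, zero_mem _, zero_mem _, by simp⟩
    · rintro x y hx hy ⟨s, hsS, hsm, hds⟩ ⟨t, htS, htm, hdt⟩
      refine ⟨s + t, add_mem hsS htS, add_mem hsm htm, ?_⟩
      have : x + y - (s + t) = (x - s) + (y - t) := by ring
      rw [this]
      exact add_mem hds hdt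
    · rintro a z hzmem ⟨s, hsS, hsm, hds⟩
      have hzm : z ∈ m := by rw [hm]; exact hzmem
      obtain ⟨Pr, rfl⟩ := hπ a
      set l := coeff 0 Pr with hl
      have hP₀ : Pr - C l ∈ Jid := by
        rw [hJid]
        rw [mem_span_X_iff]
        intro d hd
        have hcd : coeff d (Pr - C l) ≠ 0 := mem_support_iff.mp hd
        by_contra hcon
        push_neg at hcon
        have hd0 : d = 0 := Finsupp.ext fun a => hcon a
        apply hcd
        rw [hd0, coeff_sub, coeff_zero_C, hl, sub_self]
      have hπP₀ : π (Pr - C l) ∈ m := by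
        rw [hmJ]; exact Ideal.mem_map_of_mem π hP₀
      refine ⟨π (C l) * s, mul_mem (hCS l) hsS, Ideal.mul_mem_left _ _ hsm, ?_⟩
      have hdec : π Pr • z - π (C l) * s
          = π (C l) * (z - s) + π (Pr - C l) * z := by
        rw [smul_eq_mul, map_sub]
        ring
      rw [hdec]
      refine add_mem (Ideal.mul_mem_left _ _ hds) ?_
      rw [pow_two]
      exact Ideal.mul_mem_mul hπP₀ hzm
  -- propagate to higher powers
  have hZ : ∀ k, ∀ z ∈ m ^ (k + 1), ∃ s, s ∈ S ∧ s ∈ m ^ (k + 1) ∧ z - s ∈ m ^ (k + 2) := by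
    intro k
    induction k with
    | zero =>
      intro z hz
      rw [pow_one] at hz
      obtain ⟨s, hsS, hsm, hd⟩ := hZ1 z hz
      exact ⟨s, hsS, by rwa [pow_one], hd⟩
    | succ k IH =>
      intro z hz
      rw [pow_succ] at hz
      refine Submodule.mul_induction_on hz ?_ ?_
      · intro a ha b hb
        obtain ⟨sa, hsaS, hsam, hda⟩ := IH a ha
        obtain ⟨sb, hsbS, hsbm, hdb⟩ := hZ1 b hb
        refine ⟨sa * sb, mul_mem hsaS hsbS, ?_, ?_⟩
        · rw [pow_succ]
          exact Ideal.mul_mem_mul hsam hsbm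
        · have : a * b - sa * sb = (a - sa) * b + sa * (b - sb) := by ring
          rw [this]
          refine add_mem ?_ ?_
          · rw [show k + 1 + 2 = (k + 2) + 1 by ring, pow_succ]
            exact Ideal.mul_mem_mul hda hb
          · rw [show k + 1 + 2 = (k + 1) + 2 by ring, pow_add]
            exact Ideal.mul_mem_mul hsam hdb
      · rintro x y ⟨s, hsS, hsm, hds⟩ ⟨t, htS, htm, hdt⟩
        refine ⟨s + t, add_mem hsS htS, add_mem hsm htm, ?_⟩
        have : x + y - (s + t) = (x - s) + (y - t) := by ring
        rw [this]
        exact add_mem hds hdt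
  -- everything in m^2 is in S
  have hiter : ∀ u t, ∀ z ∈ m ^ (t + 1), ∃ s ∈ S, z - s ∈ m ^ (t + 1 + u) := by
    intro u
    induction u with
    | zero => intro t z hz; exact ⟨0, zero_mem _, by simpa using hz⟩
    | succ u IH =>
      intro t z hz
      obtain ⟨s, hsS, _, hd⟩ := hZ t z hz
      obtain ⟨s', hs'S, hd'⟩ := IH (t + 1) (z - s) hd
      refine ⟨s + s', add_mem hsS hs'S, ?_⟩
      have h1 : z - (s + s') = z - s - s' := by ring
      have h2 : t + 1 + (u + 1) = t + 1 + 1 + u := by ring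
      rw [h1, h2]
      exact hd'
  have hSm2 : ∀ z ∈ m ^ 2, z ∈ S := by
    intro z hz
    obtain ⟨s, hsS, hd⟩ := hiter N 1 z (by rwa [show (1 : ℕ) + 1 = 2 from rfl])
    have : z - s ∈ (⊥ : Ideal R) := by
      rw [← hN]
      exact Ideal.pow_le_pow_right (by omega) hd
    rw [Ideal.mem_bot, sub_eq_zero] at this
    rwa [this]
  have hxiS : π (X i) ∈ S := by
    obtain ⟨s, hsS, _, hd⟩ := hgen i
    have : π (X i) = s + (π (X i) - s) := by ring
    rw [this]
    exact add_mem hsS (hSm2 _ hd)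
  have hallS : ∀ Pr : MvPolynomial (Fin n) L, π Pr ∈ S := by
    intro Pr
    induction Pr using MvPolynomial.induction_on with
    | C l => exact hCS l
    | add q q' hq hq' => rw [map_add]; exact add_mem hq hq'
    | mul_X q j hq =>
      rw [map_mul]
      refine mul_mem hq ?_
      by_cases hj : j = i
      · rw [hj]; exact hxiS
      · exact hxjS j hj
  have hσsurj : Function.Surjective σ := by
    intro a
    obtain ⟨Pr, rfl⟩ := hπ a
    exact hallS Pr
  -- injectivity via Noetherianity
  haveI : IsNoetherianRing R := isNoetherianRing_of_surjective _ R π hπ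
  have hσinj : Function.Injective σ := by
    have hpowapp : ∀ (k : ℕ) (x : R), (σ ^ (k + 1)) x = σ ((σ ^ k) x) := by
      intro k x
      rw [pow_succ']
      rfl
    have hmono : Monotone fun k => RingHom.ker (σ ^ k) := by
      apply monotone_nat_of_le_succ
      intro k x hx
      rw [RingHom.mem_ker] at hx ⊢
      rw [hpowapp, hx, map_zero]
    obtain ⟨Nst, hNst⟩ := monotone_stabilizes_iff_noetherian.mpr inferInstance
      ⟨fun k => RingHom.ker (σ ^ k), hmono⟩
    have hpowsurj : ∀ k : ℕ, Function.Surjective (σ ^ k) := by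
      intro k
      induction k with
      | zero => exact fun x => ⟨x, rfl⟩
      | succ k IH =>
        intro x
        obtain ⟨y, hy⟩ := hσsurj x
        obtain ⟨z, hz⟩ := IH y
        exact ⟨z, by rw [hpowapp, hz, hy]⟩
    have hker0 : ∀ x, σ x = 0 → x = 0 := by
      intro x hx
      obtain ⟨y, hy⟩ := hpowsurj Nst x
      have hy1 : y ∈ RingHom.ker (σ ^ (Nst + 1)) := by
        rw [RingHom.mem_ker, hpowapp, hy, hx]
      have hkeq : RingHom.ker (σ ^ Nst) = RingHom.ker (σ ^ (Nst + 1)) :=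
        hNst (Nst + 1) (Nat.le_succ _)
      rw [← hkeq, RingHom.mem_ker] at hy1
      rw [← hy, hy1]
    intro x y hxy
    have h0 : σ (x - y) = 0 := by rw [map_sub, hxy, sub_self]
    exact sub_eq_zero.mp (hker0 _ h0)
  -- the annihilator of x_i
  have hann : ∀ r' : R, r' * π (X i) = 0 → r' ∈ Ideal.span {π (X i) ^ (p - 1)} := by
    intro r' hre
    obtain ⟨G, rfl⟩ := hπ r'
    have hGX : G * X i ∈ RingHom.ker π := by
      rw [RingHom.mem_ker, map_mul]; exact hre
    rw [hker] at hGX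
    have hsupp := (mem_span_Xpow_iff (p := p) (G * X i)).mp hGX
    set K : Ideal (MvPolynomial (Fin n) L) :=
      Ideal.span ({X i ^ (p - 1)} ∪ Set.range fun j : Fin n => (X j : MvPolynomial (Fin n) L) ^ p)
      with hK
    have hGK : G ∈ K := by
      apply mem_of_support
      intro d hd
      have hd' : d + Finsupp.single i 1 ∈ (G * X i).support := by
        rw [support_mul_X]
        exact Finset.mem_map.mpr ⟨d, hd, rfl⟩
      obtain ⟨j, hj⟩ := hsupp _ hd'
      rw [Finsupp.add_apply, Finsupp.single_apply] at hj
      by_cases hji : i = j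
      · rw [if_pos hji] at hj
        have hle : p - 1 ≤ d i := by rw [hji]; omega
        refine monomial_mem_of_le _ (Finsupp.single_le_iff.mpr hle) ?_
        rw [← X_pow_eq_monomial]
        exact Ideal.subset_span (Or.inl rfl)
      · rw [if_neg hji] at hj
        have hle : p ≤ d j := by omega
        refine monomial_mem_of_le _ (Finsupp.single_le_iff.mpr hle) ?_
        rw [← X_pow_eq_monomial]
        exact Ideal.subset_span (Or.inr ⟨j, rfl⟩)
    have hmem : π G ∈ Ideal.map π K := Ideal.mem_map_of_mem π hGK
    rw [hK, Ideal.map_span] at hmem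
    have hKle : Ideal.span (π '' ({X i ^ (p - 1)}
        ∪ Set.range fun j : Fin n => (X j : MvPolynomial (Fin n) L) ^ p))
        ≤ Ideal.span {π (X i) ^ (p - 1)} := by
      rw [Ideal.span_le]
      rintro _ ⟨x, hx | ⟨j, rfl⟩, rfl⟩
      · rw [Set.mem_singleton_iff] at hx
        rw [hx, map_pow]
        exact Ideal.subset_span rfl
      · rw [map_pow, hXp0 j]
        exact Ideal.zero_mem _
    exact hKle hmem
  -- conclusion
  intro r
  constructor
  · intro hr
    set e : R ≃+* R := RingEquiv.ofBijective σ ⟨hσinj, hσsurj⟩ with he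
    have hea : ∀ a, e a = σ a := fun a => rfl
    have h1 : e.symm r * π (X i) = 0 := by
      apply e.injective
      rw [map_mul, map_zero, hea, hea, hσxi]
      have hsr : σ (e.symm r) = r := e.apply_symm_apply r
      rw [hsr, hr]
    obtain ⟨t, ht⟩ := Ideal.mem_span_singleton'.mp (hann _ h1)
    refine Ideal.mem_span_singleton'.mpr ⟨e t, ?_⟩
    have h2 := congrArg e ht
    rw [map_mul, map_pow, hea (π (X i)), hσxi, RingEquiv.apply_symm_apply] at h2
    rwa [hea t] at h2
  · exact hbw r
end

section
/- Let R be a differentiably simple commutative ring and S ⊆ R a subring such that R is a free S-module. Then S is differentiably simple. -/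
theorem Ideal.isDifferential_span {R : Type*} [CommRing R] {T : Set R}
    (hT : ∀ D : Derivation ℤ R R, ∀ x ∈ T, D x ∈ Ideal.span T) :
    (Ideal.span T).IsDifferential := by
  intro D x hx
  induction hx using Submodule.span_induction with
  | mem x hx => exact hT D x hx
  | zero => simp
  | add x y _ _ hx hy => simpa using Ideal.add_mem _ hx hy
  | smul a x hx hDx =>
    rw [smul_eq_mul, D.leibniz]
    exact Ideal.add_mem _ (Ideal.mul_mem_left _ a hDx) (Ideal.mul_mem_right _ _ hx)

section FreeAlgebra

variable {S R ι : Type*} [CommRing S] [CommRing R] [Algebra S R]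

theorem Module.Basis.mem_map_algebraMap_of_repr_mem (b : Module.Basis ι S R) {J : Ideal S}
    {x : R} (hx : ∀ i, b.repr x i ∈ J) : x ∈ J.map (algebraMap S R) := by
  rw [← b.linearCombination_repr x, Finsupp.linearCombination_apply]
  refine Ideal.sum_mem _ fun i _ => ?_
  simp only [Algebra.smul_def]
  exact Ideal.mul_mem_right _ _ (Ideal.mem_map_of_mem _ (hx i))

theorem Ideal.IsDifferential.map_algebraMap (b : Module.Basis ι S R) {J : Ideal S}
    (hJ : J.IsDifferential) : (J.map (algebraMap S R)).IsDifferential := by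
  refine Ideal.isDifferential_span fun D _ ⟨c, hc, hcx⟩ => hcx ▸ ?_
  exact b.mem_map_algebraMap_of_repr_mem fun i =>
    hJ ((b.coord i).compDer (D.compAlgebraMap S)) c hc

theorem IsDifferentiablySimple.of_free [Module.Free S R] [FaithfulSMul S R]
    (hR : IsDifferentiablySimple R) : IsDifferentiablySimple S := by
  intro J hJ
  have hinj := FaithfulSMul.algebraMap_injective S R
  rcases subsingleton_or_nontrivial R with hR₀ | hR₀
  · have : Subsingleton S := hinj.subsingleton
    exact Or.inl (Subsingleton.elim _ _)
  have hJ_eq : (J.map (algebraMap S R)).comap (algebraMap S R) = J :=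
    J.comap_map_eq_self_of_faithfullyFlat
  rcases hR _ (hJ.map_algebraMap (Module.Free.chooseBasis S R)) with h | h
  · rw [← hJ_eq, h, ← RingHom.ker_eq_comap_bot]
    exact Or.inl ((RingHom.injective_iff_ker_eq_bot _).1 hinj)
  · rw [← hJ_eq, h, Ideal.comap_top]
    exact Or.inr rfl

end FreeAlgebra

theorem stmt7 (R : Type*) [CommRing R] (hR : IsDifferentiablySimple R)
    (S : Subring R) (hfree : Module.Free S R) :
    IsDifferentiablySimple S :=
  hR.of_free
end

section
/- Let A ⊆ C be a ring extension of exponent one with a p-basis {x_1,…,x_n}, and let A → A' be a ring homomorphism such that for each i there exists y_i ∈ A' with y_i^p equal to the image of x_i^p. Then the elements z_i := x_i ⊗ 1 − 1 ⊗ y_i form a p-basis of C ⊗_A A' over A' with z_i^p = 0; in particular C ⊗_A A' ≅ A'[X_1,…,X_n]/⟨X_1^p,…,X_n^p⟩ as A'-algebras. -/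
/-- `x : Fin n → C` is a *p-basis* of `C` over `A` if the monomials
`x₁^{α₁} ⋯ xₙ^{αₙ}` with `0 ≤ αᵢ < p` form a basis of `C` as an `A`-module. -/
def IsPBasis (p : ℕ) (A : Type*) {C : Type*} [CommRing A] [CommRing C] [Algebra A C] {n : ℕ}
    (x : Fin n → C) : Prop :=
  LinearIndependent A (fun α : Fin n → Fin p => ∏ i, x i ^ (α i : ℕ)) ∧
    Submodule.span A (Set.range fun α : Fin n → Fin p => ∏ i, x i ^ (α i : ℕ)) = ⊤

open scoped TensorProduct

attribute [local instance] Algebra.TensorProduct.rightAlgebra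

/-!
Since `p = 0` in `C ⊗[A] A'`, Frobenius gives `zᵢ ^ p = xᵢ ^ p ⊗ 1 - 1 ⊗ yᵢ ^ p`, and both terms
are the image of the same `a ∈ A`. As `xᵢ ⊗ 1 = zᵢ + 1 ⊗ yᵢ`, the `zᵢ` generate `C ⊗[A] A'` as an
`A'`-algebra, so, being nilpotent of order `p`, their `p ^ n` truncated monomials span it. The base
change of the basis of `C` makes `C ⊗[A] A'` free of rank `p ^ n`, and a spanning family of that
size is a basis because surjective endomorphisms of finite modules are injective. The truncated
monomials of `A'[X]/(Xᵢ ^ p)` span and are sent onto this basis, which gives the presentation.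
-/

open MvPolynomial

theorem sub_pow_prime_of_natCast_eq_zero {R : Type*} [CommRing R] {p : ℕ} (hp : p.Prime)
    (h : (p : R) = 0) (x y : R) : (x - y) ^ p = x ^ p - y ^ p := by
  have := add_pow_prime_eq hp (x - y) y
  rw [sub_add_cancel, h, zero_mul, zero_mul, zero_mul, add_zero] at this
  rw [this, add_sub_cancel_right]

theorem Module.Basis.linearIndependent_of_top_le_span {R M ι : Type*} [CommRing R]
    [AddCommGroup M] [Module R M] [Fintype ι] (b : Module.Basis ι R M) {v : ι → M}
    (hv : ⊤ ≤ Submodule.span R (Set.range v)) : LinearIndependent R v := by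
  nontriviality R
  exact linearIndependent_of_top_le_span_of_card_eq_finrank hv (Module.finrank_eq_card_basis b).symm

theorem LinearMap.bijective_of_span_eq_top_of_linearIndependent_comp {R M N ι : Type*} [CommRing R]
    [AddCommGroup M] [Module R M] [AddCommGroup N] [Module R N] {f : M →ₗ[R] N} {v : ι → M}
    (hv : Submodule.span R (Set.range v) = ⊤) (hfv : LinearIndependent R (f ∘ v))
    (hfv_span : Submodule.span R (Set.range (f ∘ v)) = ⊤) : Function.Bijective f := by
  let bv := Module.Basis.mk (hfv.of_comp f) hv.ge
  let bfv := Module.Basis.mk hfv hfv_span.ge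
  have hf : f = (bv.equiv bfv (Equiv.refl ι)).toLinearMap := bv.ext fun i => by
    rw [LinearEquiv.coe_coe, Module.Basis.equiv_apply, Equiv.refl_apply]
    simp only [bv, bfv, Module.Basis.mk_apply, Function.comp_apply]
  exact hf ▸ LinearEquiv.bijective _

section PBasis

variable {R S : Type*} [CommRing R] [CommRing S] [Algebra R S] {p n : ℕ}

theorem IsPBasis.adjoin_range_eq_top {x : Fin n → S} (hx : IsPBasis p R x) :
    Algebra.adjoin R (Set.range x) = ⊤ := by
  refine eq_top_iff.2 fun c _ => ?_
  have hc : c ∈ Submodule.span R (Set.range fun α : Fin n → Fin p => ∏ i, x i ^ (α i : ℕ)) :=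
    hx.2 ▸ Submodule.mem_top
  refine (Subalgebra.mem_toSubmodule _).1 (Submodule.span_le.2 ?_ hc)
  rintro _ ⟨α, rfl⟩
  exact Subalgebra.prod_mem _ fun i _ =>
    Subalgebra.pow_mem _ (Algebra.subset_adjoin (Set.mem_range_self i)) _

theorem span_prod_pow_eq_top_of_pow_eq_zero {z : Fin n → S}
    (hadj : Algebra.adjoin R (Set.range z) = ⊤) (hz : ∀ i, z i ^ p = 0) :
    Submodule.span R (Set.range fun α : Fin n → Fin p => ∏ i, z i ^ (α i : ℕ)) = ⊤ := by
  rw [Algebra.adjoin_range_eq_range_aeval, AlgHom.range_eq_top] at hadj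
  rw [eq_top_iff]
  rintro s -
  obtain ⟨q, rfl⟩ := hadj s
  induction q using MvPolynomial.induction_on' with
  | monomial d a =>
    rw [aeval_monomial, ← Algebra.smul_def, Finsupp.prod_fintype _ _ fun i => pow_zero _]
    refine Submodule.smul_mem _ a ?_
    by_cases hd : ∀ i, d i < p
    · exact Submodule.subset_span ⟨fun i => ⟨d i, hd i⟩, rfl⟩
    · obtain ⟨i, hi⟩ := not_forall.1 hd
      rw [Finset.prod_eq_zero (Finset.mem_univ i) (f := fun i => z i ^ d i)
        (pow_eq_zero_of_le (not_lt.1 hi) (hz i))]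
      exact zero_mem _
  | add q r hq hr => rw [map_add]; exact add_mem hq hr

theorem isPBasis_of_adjoin_eq_top (b : Module.Basis (Fin n → Fin p) R S) {z : Fin n → S}
    (hadj : Algebra.adjoin R (Set.range z) = ⊤) (hz : ∀ i, z i ^ p = 0) : IsPBasis p R z :=
  have hspan := span_prod_pow_eq_top_of_pow_eq_zero hadj hz
  ⟨b.linearIndependent_of_top_le_span hspan.ge, hspan⟩

theorem adjoin_range_mk_X_eq_top (I : Ideal (MvPolynomial (Fin n) R)) :
    Algebra.adjoin R (Set.range fun i => Ideal.Quotient.mkₐ R I (X i)) = ⊤ := by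
  rw [Algebra.adjoin_range_eq_range_aeval, AlgHom.range_eq_top,
    show aeval (fun i => Ideal.Quotient.mkₐ R I (X i)) = Ideal.Quotient.mkₐ R I from
      algHom_ext fun i => aeval_X _ _]
  exact Ideal.Quotient.mkₐ_surjective R I

theorem IsPBasis.nonempty_algEquiv_quotient {z : Fin n → S} (hz : IsPBasis p R z)
    (hzp : ∀ i, z i ^ p = 0) :
    Nonempty (S ≃ₐ[R] MvPolynomial (Fin n) R ⧸
      Ideal.span (Set.range fun i : Fin n => (X i : MvPolynomial (Fin n) R) ^ p)) := by
  set I := Ideal.span (Set.range fun i : Fin n => (X i : MvPolynomial (Fin n) R) ^ p)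
  have hI : ∀ q ∈ I, aeval z q = 0 := fun q hq =>
    (Ideal.span_le (I := RingHom.ker (aeval z)).2 (by rintro _ ⟨i, rfl⟩; simp [hzp])) hq
  let φ := Ideal.Quotient.liftₐ I (aeval z) hI
  let w : Fin n → MvPolynomial (Fin n) R ⧸ I := fun i => Ideal.Quotient.mkₐ R I (X i)
  have hφw : ∀ i, φ (w i) = z i := fun i =>
    (DFunLike.congr_fun (Ideal.Quotient.liftₐ_comp I (aeval z) hI) (X i)).trans (aeval_X z i)
  have hwp : ∀ i, w i ^ p = 0 := fun i => by
    rw [← map_pow, Ideal.Quotient.mkₐ_eq_mk, Ideal.Quotient.eq_zero_iff_mem]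
    exact Ideal.subset_span ⟨i, rfl⟩
  have hφmon : (φ.toLinearMap ∘ fun α : Fin n → Fin p => ∏ i, w i ^ (α i : ℕ)) =
      fun α => ∏ i, z i ^ (α i : ℕ) := by
    funext α
    simp only [Function.comp_apply, AlgHom.toLinearMap_apply, map_prod, map_pow, hφw]
  have hbij : Function.Bijective φ.toLinearMap :=
    LinearMap.bijective_of_span_eq_top_of_linearIndependent_comp
      (span_prod_pow_eq_top_of_pow_eq_zero (adjoin_range_mk_X_eq_top I) hwp)
      (hφmon ▸ hz.1) (hφmon ▸ hz.2)
  exact ⟨(AlgEquiv.ofBijective φ hbij).symm⟩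

end PBasis

section TensorProduct

variable {A C A' : Type*} [CommRing A] [CommRing C] [CommRing A'] [Algebra A C] [Algebra A A']

theorem tmul_one_sub_one_tmul_pow_eq_zero {p : ℕ} (hp : p.Prime) [CharP C p] {c : C} {b : A'}
    {a : A} (hc : algebraMap A C a = c ^ p) (hb : b ^ p = algebraMap A A' a) :
    (c ⊗ₜ[A] (1 : A') - (1 : C) ⊗ₜ[A] b) ^ p = 0 := by
  have hp0 : (p : C ⊗[A] A') = 0 := by
    rw [← map_natCast Algebra.TensorProduct.includeLeftRingHom, CharP.cast_eq_zero, map_zero]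
  rw [sub_pow_prime_of_natCast_eq_zero hp hp0, Algebra.TensorProduct.tmul_pow,
    Algebra.TensorProduct.tmul_pow, one_pow, one_pow, ← hc, hb,
    Algebra.TensorProduct.tmul_one_eq_one_tmul, sub_self]

theorem adjoin_range_tmul_one_sub_one_tmul_eq_top {n : ℕ} {x : Fin n → C}
    (hx : Algebra.adjoin A (Set.range x) = ⊤) (y : Fin n → A') :
    Algebra.adjoin A' (Set.range fun i => x i ⊗ₜ[A] (1 : A') - (1 : C) ⊗ₜ[A] y i) = ⊤ := by
  have hgen : Algebra.adjoin A' (Set.range fun i => x i ⊗ₜ[A] (1 : A')) = ⊤ := by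
    have h := congr_arg (Subalgebra.map (Algebra.TensorProduct.commRight A A' C).toAlgHom)
      (Algebra.TensorProduct.adjoin_one_tmul_image_eq_top (A := A') _ hx)
    rwa [AlgHom.map_adjoin, Algebra.map_top, (AlgHom.range_eq_top _).2 (AlgEquiv.surjective _),
      ← Set.image_comp, ← Set.range_comp] at h
  rw [eq_top_iff, ← hgen, Algebra.adjoin_le_iff]
  rintro _ ⟨i, rfl⟩
  show x i ⊗ₜ[A] (1 : A') ∈ _
  rw [← sub_add_cancel (x i ⊗ₜ[A] (1 : A')) ((1 : C) ⊗ₜ[A] y i)]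
  exact add_mem (Algebra.subset_adjoin ⟨i, rfl⟩) (Subalgebra.algebraMap_mem _ (y i))

end TensorProduct

theorem stmt11_general (p : ℕ) (hp : p.Prime) (A C A' : Type*) [CommRing A] [CommRing C]
    [CommRing A'] [Algebra A C] [Algebra A A'] [CharP C p]
    (n : ℕ) (x : Fin n → C) (hx : IsPBasis p A x)
    (y : Fin n → A')
    (hy : ∀ i, ∃ a : A, algebraMap A C a = x i ^ p ∧ (y i) ^ p = algebraMap A A' a) :
    (IsPBasis p A' (fun i => (x i ⊗ₜ[A] (1 : A') - (1 : C) ⊗ₜ[A] y i : C ⊗[A] A'))) ∧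
      (∀ i, (x i ⊗ₜ[A] (1 : A') - (1 : C) ⊗ₜ[A] y i : C ⊗[A] A') ^ p = 0) ∧
      Nonempty ((C ⊗[A] A') ≃ₐ[A']
        (MvPolynomial (Fin n) A' ⧸
          Ideal.span (Set.range fun i : Fin n =>
            (MvPolynomial.X i : MvPolynomial (Fin n) A') ^ p))) := by
  have hzp : ∀ i, (x i ⊗ₜ[A] (1 : A') - (1 : C) ⊗ₜ[A] y i : C ⊗[A] A') ^ p = 0 := fun i =>
    have ⟨_, hxa, hya⟩ := hy i
    tmul_one_sub_one_tmul_pow_eq_zero hp hxa hya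
  let b : Module.Basis (Fin n → Fin p) A' (C ⊗[A] A') :=
    (Algebra.TensorProduct.basis A' (Module.Basis.mk hx.1 hx.2.ge)).map
      (Algebra.TensorProduct.commRight A A' C).toLinearEquiv
  have hz := isPBasis_of_adjoin_eq_top b
    (adjoin_range_tmul_one_sub_one_tmul_eq_top hx.adjoin_range_eq_top y) hzp
  exact ⟨hz, hzp, hz.nonempty_algEquiv_quotient hzp⟩

theorem stmt11 (p : ℕ) (hp : p.Prime) (A C A' : Type*) [CommRing A] [CommRing C]
    [CommRing A'] [Algebra A C] [Algebra A A'] [CharP C p]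
    (hexp : ∀ c : C, ∃ a : A, algebraMap A C a = c ^ p)
    (n : ℕ) (x : Fin n → C) (hx : IsPBasis p A x)
    (y : Fin n → A')
    (hy : ∀ i, ∃ a : A, algebraMap A C a = x i ^ p ∧ (y i) ^ p = algebraMap A A' a) :
    (IsPBasis p A' (fun i => (x i ⊗ₜ[A] (1 : A') - (1 : C) ⊗ₜ[A] y i : C ⊗[A] A'))) ∧
      (∀ i, (x i ⊗ₜ[A] (1 : A') - (1 : C) ⊗ₜ[A] y i : C ⊗[A] A') ^ p = 0) ∧
      Nonempty ((C ⊗[A] A') ≃ₐ[A']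
        (MvPolynomial (Fin n) A' ⧸
          Ideal.span (Set.range fun i : Fin n =>
            (MvPolynomial.X i : MvPolynomial (Fin n) A') ^ p))) :=
  stmt11_general p hp A C A' n x hx y hy
end

section
/- Let C' ⊆ C be a finite extension of commutative rings of characteristic p such that C^p ⊆ C' and the module of Kähler differentials Ω_{C/C'} is zero. Then C = C'. -/
/-!
Let `I` be the kernel of the multiplication map `C ⊗[C'] C → C`. As `C` is finite over `C'`, `I` is
finitely generated, and `Ω[C⁄C'] = I / I²` vanishes, so `I` is idempotent and hence generated by an
idempotent element. But `I` is spanned by the elements `1 ⊗ s - s ⊗ 1`, whose `p`-th powers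
`1 ⊗ sᵖ - sᵖ ⊗ 1` vanish because `sᵖ ∈ C'`; so `I` is a nil ideal, its idempotent generator is `0`,
and `I = 0`. Thus `C' → C` is an epimorphism of rings, and a finite epimorphism is surjective.
-/

open TensorProduct

theorem Ideal.eq_bot_of_isIdempotentElem_of_le_nilradical {R : Type*} [CommRing R] {I : Ideal R}
    (hfg : I.FG) (hI : IsIdempotentElem I) (hnil : I ≤ nilradical R) : I = ⊥ := by
  obtain ⟨e, he, rfl⟩ := (I.isIdempotentElem_iff_of_fg hfg).mp hI
  rw [he.eq_zero_of_isNilpotent (hnil (Submodule.mem_span_singleton_self e)),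
    Submodule.span_zero_singleton]

namespace KaehlerDifferential

variable {R S : Type*} [CommRing R] [CommRing S] [Algebra R S]

theorem isNilpotent_one_tmul_sub_tmul_one_of_pow_mem_range {p : ℕ} (hp : p.Prime) [CharP S p]
    {s : S} {n : ℕ} (hs : s ^ p ^ n ∈ Set.range (algebraMap R S)) :
    IsNilpotent ((1 : S) ⊗ₜ[R] s - s ⊗ₜ[R] 1) := by
  rcases subsingleton_or_nontrivial (S ⊗[R] S) with _ | _
  · exact ⟨0, Subsingleton.elim _ _⟩
  have : Fact p.Prime := ⟨hp⟩
  have : CharP (S ⊗[R] S) p := (CharP.charP_iff_prime_eq_zero hp).mpr <| by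
    rw [← map_natCast (algebraMap S (S ⊗[R] S)), CharP.cast_eq_zero, map_zero]
  obtain ⟨r, hr⟩ := hs
  refine ⟨p ^ n, ?_⟩
  rw [sub_pow_char_pow, Algebra.TensorProduct.tmul_pow, Algebra.TensorProduct.tmul_pow, one_pow,
    ← hr, Algebra.algebraMap_eq_smul_one, smul_tmul, sub_self]

theorem ideal_le_nilradical_of_pow_mem_range {p : ℕ} (hp : p.Prime) [CharP S p]
    (hpow : ∀ s : S, ∃ n, s ^ p ^ n ∈ Set.range (algebraMap R S)) :
    ideal R S ≤ nilradical (S ⊗[R] S) := by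
  rw [← span_range_eq_ideal, Ideal.span_le]
  rintro _ ⟨s, rfl⟩
  obtain ⟨n, hn⟩ := hpow s
  exact isNilpotent_one_tmul_sub_tmul_one_of_pow_mem_range hp hn

end KaehlerDifferential

theorem Algebra.isEpi_of_subsingleton_kaehlerDifferential_of_ideal_le_nilradical
    {R S : Type*} [CommRing R] [CommRing S] [Algebra R S] [Algebra.EssFiniteType R S]
    [Subsingleton Ω[S⁄R]] (hnil : KaehlerDifferential.ideal R S ≤ nilradical (S ⊗[R] S)) :
    Algebra.IsEpi R S := by
  have hidem : IsIdempotentElem (KaehlerDifferential.ideal R S) :=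
    (Ideal.cotangent_subsingleton_iff _).mp ‹_›
  have hbot := Ideal.eq_bot_of_isIdempotentElem_of_le_nilradical
    (KaehlerDifferential.ideal_fg R S) hidem hnil
  refine (Algebra.isEpi_iff_forall_one_tmul_eq R S).mpr fun s => ?_
  have hs := KaehlerDifferential.one_smul_sub_smul_one_mem_ideal R s
  rwa [hbot, Submodule.mem_bot, sub_eq_zero] at hs

theorem stmt12_general (p : ℕ) (hp : p.Prime) (C' C : Type*) [CommRing C'] [CommRing C]
    [CharP C p] [Algebra C' C] [Module.Finite C' C]
    (hpow : ∀ x : C, ∃ y : C', algebraMap C' C y = x ^ p)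
    (homega : Subsingleton (Ω[C⁄C'])) :
    Function.Surjective (algebraMap C' C) := by
  have hnil := KaehlerDifferential.ideal_le_nilradical_of_pow_mem_range (R := C') hp
    fun s => ⟨1, by simpa using hpow s⟩
  have := Algebra.isEpi_of_subsingleton_kaehlerDifferential_of_ideal_le_nilradical hnil
  exact Algebra.isEpi_iff_surjective_algebraMap_of_finite.mp this

theorem stmt12 (p : ℕ) (hp : p.Prime) (C' C : Type*) [CommRing C'] [CommRing C]
    [CharP C p] [Algebra C' C] [Module.Finite C' C]
    (hsub : Function.Injective (algebraMap C' C))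
    (hpow : ∀ x : C, ∃ y : C', algebraMap C' C y = x ^ p)
    (homega : Subsingleton (Ω[C⁄C'])) :
    Function.Surjective (algebraMap C' C) :=
  stmt12_general p hp C' C hpow homega
end

section
/- Let A ⊆ C be a finite extension of commutative rings such that C is a projective A-module. Then the quotient A-module C/A is projective, and the exact sequence 0 → A → C → C/A → 0 of A-modules splits. -/
/-!
By the dual basis lemma, an element `x` of a projective module lies in `J • P`, where `J` is the
ideal of all values `f x` of linear forms at `x`. For `x = 1 ∈ C` the submodule `J • C` is an
ideal of `C` containing `1`, hence all of `C`, and Nakayama yields `a ≡ 1 mod J` with `a • C = 0`.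
Since `A → C` is injective, `a = 0`, so `1 ∈ J`: some linear form `r : C → A` has `r 1 = 1`.
This `r` retracts `A → C`, which splits `0 → A → C → C/A → 0`, and `C/A` is then a direct
summand of the projective module `C`.
-/

open Module

theorem Module.Projective.mem_smul_top_of_forall_dual_mem {R P : Type*} [CommSemiring R]
    [AddCommMonoid P] [Module R P] [Projective R P] {I : Ideal R} {x : P}
    (h : ∀ f : Dual R P, f x ∈ I) : x ∈ I • (⊤ : Submodule R P) := by
  obtain ⟨s, hs⟩ := projective_def'.mp ‹Projective R P›
  rw [← LinearMap.id_apply (R := R) x, ← hs, LinearMap.comp_apply,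
    Finsupp.linearCombination_apply]
  exact Submodule.sum_mem _ fun p _ ↦
    Submodule.smul_mem_smul (h (Finsupp.lapply p ∘ₗ s)) Submodule.mem_top

theorem Module.Projective.exists_dual_apply_one_eq_one {A C : Type*} [CommRing A] [CommRing C]
    [Algebra A C] [Module.Finite A C] [Projective A C]
    (hinj : Function.Injective (algebraMap A C)) : ∃ r : Dual A C, r 1 = 1 := by
  set J : Ideal A := LinearMap.range (Dual.eval A C 1)
  have hJ : J • (⊤ : Submodule A C) = ⊤ := by
    have h1 : (1 : C) ∈ J • (⊤ : Submodule A C) :=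
      mem_smul_top_of_forall_dual_mem fun f ↦ ⟨f, rfl⟩
    rw [Ideal.smul_top_eq_map, Submodule.restrictScalars_mem, ← Ideal.eq_top_iff_one] at h1
    rw [Ideal.smul_top_eq_map, h1, Submodule.restrictScalars_top]
  obtain ⟨a, haJ, ha⟩ := Submodule.exists_sub_one_mem_and_smul_eq_zero_of_fg_of_le_smul J ⊤
    Module.Finite.fg_top hJ.ge
  have ha0 : a = 0 := hinj <| by
    rw [map_zero, Algebra.algebraMap_eq_smul_one, ha 1 Submodule.mem_top]
  obtain ⟨r, hr⟩ : (1 : A) ∈ J := by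
    simpa [ha0] using J.neg_mem haJ
  exact ⟨r, hr⟩

theorem stmt18 (A C : Type*) [CommRing A] [CommRing C] [Algebra A C]
    [Module.Finite A C] [Module.Projective A C]
    (hsub : Function.Injective (algebraMap A C)) :
    Module.Projective A (C ⧸ LinearMap.range (Algebra.linearMap A C)) ∧
      ∃ g : (C ⧸ LinearMap.range (Algebra.linearMap A C)) →ₗ[A] C,
        (LinearMap.range (Algebra.linearMap A C)).mkQ ∘ₗ g = LinearMap.id := by
  obtain ⟨r, hr⟩ := Projective.exists_dual_apply_one_eq_one hsub
  have hretract : r ∘ₗ Algebra.linearMap A C = LinearMap.id := by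
    ext
    simpa using hr
  have hsplit := Function.Exact.split_tfae (LinearMap.exact_map_mkQ_range (Algebra.linearMap A C))
    hsub (Submodule.mkQ_surjective _)
  obtain ⟨g, hg⟩ : ∃ g, (LinearMap.range (Algebra.linearMap A C)).mkQ ∘ₗ g = LinearMap.id :=
    (hsplit.out 0 1).mpr (by exact ⟨r, hretract⟩)
  exact ⟨.of_split g _ hg, g, hg⟩
end
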